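/- arXiv:1810.09787 — 3 statements merged into one kernel-verified Lean document; each statement's English description precedes it below -/
import Mathlib

section
/- Let t be the infinite tribonacci word and let z_C(n) count the indices j ≤ n with t(j)=2 (with z_C(−1)=0). Then the position B(n) of the (n+1)-st occurrence of 0 in t satisfies B(n) = 2n − z_C(n−1) for all n ≥ 0. -/
/-- The tribonacci substitution on letters: 0 ↦ 01, 1 ↦ 02, 2 ↦ 0. -/
def sigmaW : ℕ → List ℕ
  | 0 => [0, 1]
  | 1 => [0, 2]
  | _ => [0]

/-- The substitution extended to words (concatenation homomorphism). -/
def sigmaL (w : List ℕ) : List ℕ := w.flatMap sigmaW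

/-- The infinite tribonacci word t = 0,1,0,2,0,1,0,0,1,0,2,...,
the fixed point of the substitution starting from 0. -/
def t (n : ℕ) : ℕ := (sigmaL^[n + 1] [0]).getD n 0

/-- A(n): position of the (n+1)-st occurrence of the letter 1 in t. -/
noncomputable def A (n : ℕ) : ℕ := Nat.nth (fun k => t k = 1) n

/-- B(n): position of the (n+1)-st occurrence of the letter 0 in t. -/
noncomputable def B (n : ℕ) : ℕ := Nat.nth (fun k => t k = 0) n

/-- C(n): position of the (n+1)-st occurrence of the letter 2 in t. -/
noncomputable def C (n : ℕ) : ℕ := Nat.nth (fun k => t k = 2) n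

/-!
Applying `σ` to the prefix `t 0, …, t (n-1)` gives again a prefix of `t`, since `t` is a fixed
point of `σ`; its length is `blockStart n = ∑ j < n, |σ (t j)| = 2n - #{j < n | t j = 2}`.
Each block `σ a` contains exactly one `0`, at its start, so the zeros of `t` sit exactly at the
block starts: `B n = blockStart n`.
-/

def tribWord (k : ℕ) : List ℕ := sigmaL^[k] [0]

def tPrefix (n : ℕ) : List ℕ := (List.range n).map t

def blockStart (n : ℕ) : ℕ := (sigmaL (tPrefix n)).length

@[simp]
lemma sigmaL_append (u v : List ℕ) : sigmaL (u ++ v) = sigmaL u ++ sigmaL v :=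
  List.flatMap_append

@[simp]
lemma sigmaL_cons (a : ℕ) (l : List ℕ) : sigmaL (a :: l) = sigmaW a ++ sigmaL l := rfl

@[simp]
lemma sigmaL_nil : sigmaL [] = [] := rfl

lemma sigmaW_getElem?_zero (a : ℕ) : (sigmaW a)[0]? = some 0 := by
  unfold sigmaW; split <;> rfl

lemma count_zero_sigmaW (a : ℕ) : (sigmaW a).count 0 = 1 := by
  unfold sigmaW; split <;> rfl

lemma length_sigmaW_pos (a : ℕ) : 0 < (sigmaW a).length := by
  unfold sigmaW; split <;> simp

lemma length_sigmaW {a : ℕ} (ha : a ≤ 2) : (sigmaW a).length = if a = 2 then 1 else 2 := by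
  interval_cases a <;> rfl

lemma le_two_of_mem_sigmaL {a : ℕ} {l : List ℕ} (h : a ∈ sigmaL l) : a ≤ 2 := by
  obtain ⟨b, -, hb⟩ := List.mem_flatMap.mp h
  unfold sigmaW at hb; split at hb <;> simp at hb <;> omega

lemma length_le_length_sigmaL (l : List ℕ) : l.length ≤ (sigmaL l).length := by
  induction l with
  | nil => rfl
  | cons a l ih =>
    have := length_sigmaW_pos a
    simp only [sigmaL_cons, List.length_append, List.length_cons]
    omega

lemma count_zero_sigmaL (l : List ℕ) : (sigmaL l).count 0 = l.length := by
  induction l with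
  | nil => rfl
  | cons a l ih => simp [List.count_append, count_zero_sigmaW, ih, add_comm]

lemma tribWord_succ (k : ℕ) : tribWord (k + 1) = sigmaL (tribWord k) :=
  Function.iterate_succ_apply' _ _ _

lemma tribWord_prefix_succ (k : ℕ) : tribWord k <+: tribWord (k + 1) := by
  induction k with
  | zero => exact ⟨[1], rfl⟩
  | succ k ih =>
    rw [tribWord_succ, tribWord_succ]
    exact ih.flatMap sigmaW

lemma tribWord_prefix_of_le {k m : ℕ} (h : k ≤ m) : tribWord k <+: tribWord m := by
  induction m, h using Nat.le_induction with
  | base => exact List.prefix_refl _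
  | succ m _ ih => exact ih.trans (tribWord_prefix_succ m)

lemma lt_length_tribWord (k : ℕ) : k < (tribWord k).length := by
  induction k with
  | zero => simp [tribWord]
  | succ k ih =>
    obtain ⟨tl, htl⟩ := tribWord_prefix_of_le (Nat.zero_le k)
    have hk : (tribWord k).length = tl.length + 1 := by rw [← htl]; rfl
    have hsucc : tribWord (k + 1) = [0, 1] ++ sigmaL tl := by rw [tribWord_succ, ← htl]; rfl
    have := length_le_length_sigmaL tl
    rw [hsucc, List.length_append]
    simp only [List.length_cons, List.length_nil]
    omega

lemma t_eq_getElem {k n : ℕ} (h : n < (tribWord k).length) : t n = (tribWord k)[n] := by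
  have hn : n < (tribWord (n + 1)).length := (lt_length_tribWord (n + 1)).trans' n.lt_succ_self
  have ht : t n = (tribWord (n + 1))[n] := List.getD_eq_getElem _ _ hn
  rcases le_total k (n + 1) with hle | hle
  · rw [ht, (tribWord_prefix_of_le hle).getElem h]
  · rw [ht, (tribWord_prefix_of_le hle).getElem hn]

lemma t_le_two (n : ℕ) : t n ≤ 2 := by
  have hn := lt_length_tribWord (n + 1)
  rw [t_eq_getElem (k := n + 1) (by omega)]
  exact le_two_of_mem_sigmaL (by rw [← tribWord_succ]; exact List.getElem_mem _)

@[simp]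
lemma length_tPrefix (n : ℕ) : (tPrefix n).length = n := by
  simp [tPrefix]

lemma tPrefix_succ (n : ℕ) : tPrefix (n + 1) = tPrefix n ++ [t n] := by
  simp [tPrefix, List.range_succ]

lemma tPrefix_eq_take {k n : ℕ} (h : n ≤ (tribWord k).length) :
    tPrefix n = (tribWord k).take n := by
  refine List.ext_getElem (by simp [h]) fun i hi _ => ?_
  simp only [tPrefix, List.getElem_map, List.getElem_range, List.getElem_take]
  exact t_eq_getElem (by simp at hi; omega)

lemma count_tPrefix (a n : ℕ) : (tPrefix n).count a = Nat.count (t · = a) n := by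
  simp [tPrefix, List.count, List.countP_map, Nat.count, Function.comp_def, beq_eq_decide]

lemma sigmaL_tPrefix (n : ℕ) : sigmaL (tPrefix n) = tPrefix (blockStart n) := by
  have hpre : sigmaL (tPrefix n) <+: tribWord (n + 1) := by
    rw [tPrefix_eq_take (lt_length_tribWord n).le, tribWord_succ]
    exact (List.take_prefix n _).flatMap sigmaW
  rw [blockStart, tPrefix_eq_take hpre.length_le]
  exact List.prefix_iff_eq_take.mp hpre

lemma blockStart_succ (n : ℕ) : blockStart (n + 1) = blockStart n + (sigmaW (t n)).length := by
  simp [blockStart, tPrefix_succ]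

lemma blockStart_add_count (n : ℕ) : blockStart n + Nat.count (t · = 2) n = 2 * n := by
  induction n with
  | zero => rfl
  | succ n ih =>
    rw [blockStart_succ, Nat.count_succ, length_sigmaW (t_le_two n)]
    split_ifs <;> omega

lemma t_blockStart (n : ℕ) : t (blockStart n) = 0 := by
  have hblock : tPrefix (blockStart (n + 1)) = tPrefix (blockStart n) ++ sigmaW (t n) := by
    rw [← sigmaL_tPrefix, ← sigmaL_tPrefix, tPrefix_succ]
    simp
  have hlt : blockStart n < blockStart (n + 1) := by
    have := length_sigmaW_pos (t n)
    rw [blockStart_succ]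
    omega
  have := congrArg (·[blockStart n]?) hblock
  simpa [tPrefix, hlt, List.getElem?_append_right, sigmaW_getElem?_zero] using this

lemma count_zero_blockStart (n : ℕ) : Nat.count (t · = 0) (blockStart n) = n := by
  rw [← count_tPrefix, ← sigmaL_tPrefix, count_zero_sigmaL, length_tPrefix]

lemma B_eq_blockStart (n : ℕ) : B n = blockStart n := by
  have h := Nat.nth_count (p := (t · = 0)) (t_blockStart n)
  rwa [count_zero_blockStart] at h

/-- B(n) = 2n − z_C(n−1), where z_C(n) counts indices j ≤ n with t(j)=2. -/
theorem B_formula (n : ℕ) :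
    (B n : ℤ) = 2 * n - ((Finset.range n).filter (fun j => t j = 2)).card := by
  have h := blockStart_add_count n
  rw [Nat.count_eq_card_filter_range] at h
  rw [B_eq_blockStart]
  omega
end

section
/- For the tribonacci position sequences A, B, C (positions of 1, 0, 2 in the infinite tribonacci word), one has C(n) = A(n) + B(n) + n + 2 for all n ≥ 0. -/
/-!
Writing `S m` (`sigmaLen m`) for the length of `σ(t₀ ⋯ t_{m-1})`, the fixed-point property says that
`σ(t₀ ⋯ t_{m-1}) = t₀ ⋯ t_{S m - 1}`, so the block `σ(t_m)` starts at position `S m`. Since every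
letter of `t` produces exactly one `0`, the `(n+1)`-st `0` is the first letter of `σ(t_n)`,
giving `B n = S n`; a `1` only arises as the second letter of `σ(0)` and a `2` only as the second
letter of `σ(1)`, giving `A n = S (B n) + 1` and `C n = S (A n) + 1`. Counting letters before
position `A n` turns `S (A n) = A n + #₀ + #₁` into `A n + (B n + 1) + n`.
-/

namespace Tribonacci

lemma sigmaL_append (u v : List ℕ) : sigmaL (u ++ v) = sigmaL u ++ sigmaL v :=
  List.flatMap_append

lemma sigmaL_cons (a : ℕ) (w : List ℕ) : sigmaL (a :: w) = sigmaW a ++ sigmaL w :=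
  List.flatMap_cons

lemma sigmaL_singleton (a : ℕ) : sigmaL [a] = sigmaW a := by
  simp [sigmaL]

lemma sigmaL_prefix {u v : List ℕ} (h : u <+: v) : sigmaL u <+: sigmaL v := by
  obtain ⟨w, rfl⟩ := h
  exact ⟨sigmaL w, (sigmaL_append u w).symm⟩

lemma length_sigmaL (w : List ℕ) :
    (sigmaL w).length = w.length + w.count 0 + w.count 1 := by
  induction w with
  | nil => rfl
  | cons a w ih =>
    rw [sigmaL_cons, List.length_append, ih, List.count_cons, List.count_cons]
    rcases a with _ | _ | a <;> simp [sigmaW] <;> omega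

lemma count_zero_sigmaL (w : List ℕ) : (sigmaL w).count 0 = w.length := by
  induction w with
  | nil => rfl
  | cons a w ih =>
    rw [sigmaL_cons, List.count_append, ih]
    rcases a with _ | _ | a <;> simp [sigmaW, add_comm]

lemma sigmaW_eq_pair {x y : ℕ} (hxy : sigmaW x = [0, y]) : x = 0 ∧ y = 1 ∨ x = 1 ∧ y = 2 := by
  rcases x with _ | _ | x <;> simp [sigmaW] at hxy <;> omega

lemma count_sigmaL_of_sigmaW_eq {x y : ℕ} (hxy : sigmaW x = [0, y]) (w : List ℕ) :
    (sigmaL w).count y = w.count x := by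
  induction w with
  | nil => rfl
  | cons a w ih =>
    rw [sigmaL_cons, List.count_append, ih, List.count_cons]
    rcases sigmaW_eq_pair hxy with ⟨rfl, rfl⟩ | ⟨rfl, rfl⟩ <;>
      rcases a with _ | _ | a <;> simp [sigmaW] <;> omega

lemma iterate_sigmaL_prefix_succ (n : ℕ) : sigmaL^[n] [0] <+: sigmaL^[n + 1] [0] := by
  induction n with
  | zero => exact ⟨[1], rfl⟩
  | succ n ih =>
    rw [Function.iterate_succ_apply', Function.iterate_succ_apply' _ (n + 1)]
    exact sigmaL_prefix ih

lemma iterate_sigmaL_prefix {m n : ℕ} (h : m ≤ n) : sigmaL^[m] [0] <+: sigmaL^[n] [0] := by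
  induction n, h using Nat.le_induction with
  | base => exact List.prefix_refl _
  | succ n _ ih => exact ih.trans (iterate_sigmaL_prefix_succ n)

lemma zero_mem_iterate_sigmaL (n : ℕ) : 0 ∈ sigmaL^[n] [0] :=
  (iterate_sigmaL_prefix (Nat.zero_le n)).subset (List.mem_singleton_self 0)

lemma lt_length_iterate_sigmaL (n : ℕ) : n < (sigmaL^[n] [0]).length := by
  induction n with
  | zero => simp
  | succ n ih =>
    rw [Function.iterate_succ_apply', length_sigmaL]
    have := List.one_le_count_iff.2 (zero_mem_iterate_sigmaL n)
    omega

lemma t_eq_getD_iterate {N k : ℕ} (hk : k < (sigmaL^[N] [0]).length) :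
    t k = (sigmaL^[N] [0]).getD k 0 := by
  have getD_of_prefix {u v : List ℕ} (h : u <+: v) (hu : k < u.length) :
      v.getD k 0 = u.getD k 0 := by
    obtain ⟨w, rfl⟩ := h
    simp [List.getElem?_append_left hu]
  rcases Nat.le_total N (k + 1) with h | h
  · exact getD_of_prefix (iterate_sigmaL_prefix h) hk
  · exact (getD_of_prefix (iterate_sigmaL_prefix h)
      ((lt_length_iterate_sigmaL (k + 1)).trans' (Nat.lt_succ_self k))).symm

def tPrefix (m : ℕ) : List ℕ := (List.range m).map t

@[simp]
lemma length_tPrefix (m : ℕ) : (tPrefix m).length = m := by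
  simp [tPrefix]

@[simp]
lemma getElem_tPrefix {m k : ℕ} (hk : k < (tPrefix m).length) : (tPrefix m)[k] = t k := by
  simp [tPrefix]

lemma tPrefix_succ (m : ℕ) : tPrefix (m + 1) = tPrefix m ++ [t m] := by
  simp [tPrefix, List.range_succ]

lemma count_eq_count_tPrefix (x m : ℕ) : Nat.count (t · = x) m = (tPrefix m).count x := by
  rw [Nat.count, tPrefix, List.count, List.countP_map]
  rfl

lemma eq_tPrefix_of_prefix {u : List ℕ} {N : ℕ} (h : u <+: sigmaL^[N] [0]) :
    u = tPrefix u.length := by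
  refine List.ext_getElem (by simp) fun k hk _ => ?_
  rw [getElem_tPrefix, t_eq_getD_iterate (hk.trans_le h.length_le),
    List.getD_eq_getElem _ _ (hk.trans_le h.length_le), h.getElem hk]

lemma tPrefix_prefix_iterate (m : ℕ) : tPrefix m <+: sigmaL^[m] [0] := by
  have h := eq_tPrefix_of_prefix (List.take_prefix m (sigmaL^[m] [0]))
  rw [List.length_take_of_le (lt_length_iterate_sigmaL m).le] at h
  exact h ▸ List.take_prefix _ _

/-- `sigmaLen m` is the position in `t` at which the block `σ(t m)` starts. -/
def sigmaLen (m : ℕ) : ℕ := (sigmaL (tPrefix m)).length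

lemma sigmaL_tPrefix (m : ℕ) : sigmaL (tPrefix m) = tPrefix (sigmaLen m) := by
  refine eq_tPrefix_of_prefix (N := m + 1) ?_
  rw [Function.iterate_succ_apply']
  exact sigmaL_prefix (tPrefix_prefix_iterate m)

lemma tPrefix_sigmaLen_succ (m : ℕ) :
    tPrefix (sigmaLen (m + 1)) = tPrefix (sigmaLen m) ++ sigmaW (t m) := by
  rw [← sigmaL_tPrefix, ← sigmaL_tPrefix, tPrefix_succ, sigmaL_append, sigmaL_singleton]

lemma sigmaLen_succ (m : ℕ) : sigmaLen (m + 1) = sigmaLen m + (sigmaW (t m)).length := by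
  simpa using congrArg List.length (tPrefix_sigmaLen_succ m)

lemma t_sigmaLen_add {m i : ℕ} (hi : i < (sigmaW (t m)).length) :
    t (sigmaLen m + i) = (sigmaW (t m))[i] := by
  have hlt : sigmaLen m + i < (tPrefix (sigmaLen (m + 1))).length := by
    simp [sigmaLen_succ, hi]
  rw [← getElem_tPrefix hlt, List.getElem_of_eq (tPrefix_sigmaLen_succ m),
    List.getElem_append_right (by simp)]
  simp

lemma exists_sigmaW_eq_zero_cons (a : ℕ) : ∃ w, sigmaW a = 0 :: w := by
  rcases a with _ | _ | a <;> simp [sigmaW]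

lemma t_sigmaLen (m : ℕ) : t (sigmaLen m) = 0 := by
  obtain ⟨w, hw⟩ := exists_sigmaW_eq_zero_cons (t m)
  simpa [hw] using t_sigmaLen_add (m := m) (i := 0) (by simp [hw])

lemma t_sigmaLen_add_one_of_sigmaW_eq {m x y : ℕ} (hxy : sigmaW x = [0, y]) (hm : t m = x) :
    t (sigmaLen m + 1) = y := by
  simpa [hm, hxy] using t_sigmaLen_add (m := m) (i := 1) (by simp [hm, hxy])

lemma sigmaLen_strictMono : StrictMono sigmaLen := by
  refine strictMono_nat_of_lt_succ fun m => ?_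
  obtain ⟨w, hw⟩ := exists_sigmaW_eq_zero_cons (t m)
  simp [sigmaLen_succ, hw]

lemma sigmaLen_eq (m : ℕ) :
    sigmaLen m = m + Nat.count (t · = 0) m + Nat.count (t · = 1) m := by
  rw [sigmaLen, length_sigmaL, length_tPrefix, count_eq_count_tPrefix, count_eq_count_tPrefix]

lemma count_zero_sigmaLen (m : ℕ) : Nat.count (t · = 0) (sigmaLen m) = m := by
  rw [count_eq_count_tPrefix, ← sigmaL_tPrefix, count_zero_sigmaL, length_tPrefix]

lemma count_sigmaLen_of_sigmaW_eq {x y : ℕ} (hxy : sigmaW x = [0, y]) (m : ℕ) :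
    Nat.count (t · = y) (sigmaLen m) = Nat.count (t · = x) m := by
  rw [count_eq_count_tPrefix, ← sigmaL_tPrefix, count_sigmaL_of_sigmaW_eq hxy,
    count_eq_count_tPrefix]

lemma B_eq_sigmaLen (n : ℕ) : B n = sigmaLen n := by
  have h := Nat.nth_count (p := (t · = 0)) (t_sigmaLen n)
  rwa [count_zero_sigmaLen] at h

lemma infinite_setOf_t_eq_zero : {k | t k = 0}.Infinite :=
  Set.infinite_of_injective_forall_mem sigmaLen_strictMono.injective t_sigmaLen

lemma infinite_setOf_t_eq_of_sigmaW_eq {x y : ℕ} (hxy : sigmaW x = [0, y])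
    (hx : {k | t k = x}.Infinite) : {k | t k = y}.Infinite := by
  have hinj : Function.Injective (sigmaLen · + 1) :=
    (add_left_injective 1).comp sigmaLen_strictMono.injective
  refine (hx.image hinj.injOn).mono ?_
  rintro _ ⟨m, hm, rfl⟩
  exact t_sigmaLen_add_one_of_sigmaW_eq hxy hm

lemma nth_eq_sigmaLen_nth_add_one {x y : ℕ} (hxy : sigmaW x = [0, y])
    (hx : {k | t k = x}.Infinite) (n : ℕ) :
    Nat.nth (t · = y) n = sigmaLen (Nat.nth (t · = x) n) + 1 := by
  have hy : y ≠ 0 := by obtain h | h := sigmaW_eq_pair hxy <;> omega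
  have hcount : Nat.count (t · = y) (sigmaLen (Nat.nth (t · = x) n) + 1) = n := by
    rw [Nat.count_succ, count_sigmaLen_of_sigmaW_eq hxy, Nat.count_nth_of_infinite hx,
      t_sigmaLen, if_neg hy.symm, add_zero]
  have h := Nat.nth_count (p := (t · = y))
    (t_sigmaLen_add_one_of_sigmaW_eq hxy (Nat.nth_mem_of_infinite hx n))
  rwa [hcount] at h

lemma A_eq_sigmaLen_B_add_one (n : ℕ) : A n = sigmaLen (B n) + 1 :=
  nth_eq_sigmaLen_nth_add_one rfl infinite_setOf_t_eq_zero n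

lemma infinite_setOf_t_eq_one : {k | t k = 1}.Infinite :=
  infinite_setOf_t_eq_of_sigmaW_eq rfl infinite_setOf_t_eq_zero

lemma C_eq_sigmaLen_A_add_one (n : ℕ) : C n = sigmaLen (A n) + 1 :=
  nth_eq_sigmaLen_nth_add_one rfl infinite_setOf_t_eq_one n

end Tribonacci

open Tribonacci in
/-- C(n) = A(n) + B(n) + n + 2 for all n ≥ 0. -/
theorem C_eq_A_add_B (n : ℕ) : C n = A n + B n + n + 2 := by
  have hzero : Nat.count (t · = 0) (A n) = B n + 1 := by
    rw [A_eq_sigmaLen_B_add_one, Nat.count_succ, count_zero_sigmaLen, if_pos (t_sigmaLen _)]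
  have hone : Nat.count (t · = 1) (A n) = n :=
    Nat.count_nth_of_infinite infinite_setOf_t_eq_one n
  rw [C_eq_sigmaLen_A_add_one, sigmaLen_eq, hzero, hone]
  ring
end

section
/- For the tribonacci position sequences A and B (positions of 1 and 0 in the infinite tribonacci word), the composition B∘B satisfies B(B(k)) = A(k) − 1 for all k ≥ 0. -/
/-!
Since `t = σ(t)`, the word `t` is the concatenation of the blocks `σ(t n)`; let `s n`
(`blockStart n`) be the position where the `n`-th block starts. Every block begins with its
only `0`, and the only block containing a `1` is `σ(0) = 01`, at its second letter. So the
zeros of `t` are exactly the `s n`, whence `B = s`, and the ones are the `s n + 1` with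
`t n = 0`, i.e. the `s (s k) + 1`, whence `A = s ∘ s + 1 = B ∘ B + 1`.
-/

theorem Nat.nth_eq_of_strictMono {p : ℕ → Prop} {f : ℕ → ℕ} (hf : StrictMono f)
    (hp : ∀ q, p q ↔ q ∈ Set.range f) (n : ℕ) : Nat.nth p n = f n := by
  have hinf : (Set.ofPred p).Infinite :=
    Set.ext hp ▸ Set.infinite_range_of_injective hf.injective
  have hall : ∀ m, m ∈ {m : ℕ | ∀ hfin : (Set.ofPred p).Finite, m < hfin.toFinset.card} :=
    fun m hfin => absurd hfin hinf
  refine (Nat.eq_nth_of_strictMonoOn_of_mapsTo_of_surjOn f ?_ ?_ (hf.strictMonoOn _) (hall n)).symm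
  · rintro q hq
    obtain ⟨m, rfl⟩ := (hp q).1 hq
    exact ⟨m, hall m, rfl⟩
  · exact fun m _ => (hp _).2 ⟨m, rfl⟩

theorem Nat.exists_le_lt_succ_of_strictMono {f : ℕ → ℕ} (hf : StrictMono f) {q : ℕ}
    (hq : f 0 ≤ q) : ∃ n, f n ≤ q ∧ q < f (n + 1) := by
  have hex : ∃ m, q < f m := ⟨q + 1, Nat.lt_of_lt_of_le (Nat.lt_succ_self q) (hf.id_le _)⟩
  have hpos : Nat.find hex ≠ 0 := fun h0 => by
    have := Nat.find_spec hex
    rw [h0] at this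
    omega
  obtain ⟨n, hn⟩ : ∃ n, Nat.find hex = n + 1 := Nat.exists_eq_add_one_of_ne_zero hpos
  refine ⟨n, not_lt.1 (Nat.find_min hex (by omega)), ?_⟩
  rw [← hn]
  exact Nat.find_spec hex

namespace Tribonacci

open List

theorem sigmaW_ne_nil (x : ℕ) : sigmaW x ≠ [] := by
  rcases x with _ | _ | x <;> simp [sigmaW]

theorem sigmaW_getElem_eq_zero_iff (x : ℕ) {j : ℕ} (hj : j < (sigmaW x).length) :
    (sigmaW x)[j] = 0 ↔ j = 0 := by
  rcases x with _ | _ | x <;> simp only [sigmaW, length_cons, length_nil] at hj <;>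
    interval_cases j <;> simp [sigmaW]

theorem sigmaW_getElem_eq_one_iff (x : ℕ) {j : ℕ} (hj : j < (sigmaW x).length) :
    (sigmaW x)[j] = 1 ↔ x = 0 ∧ j = 1 := by
  rcases x with _ | _ | x <;> simp only [sigmaW, length_cons, length_nil] at hj <;>
    interval_cases j <;> simp [sigmaW]

theorem length_le_length_sigmaL (u : List ℕ) : u.length ≤ (sigmaL u).length := by
  induction u with
  | nil => simp
  | cons x u ih =>
    have := length_pos_of_ne_nil (sigmaW_ne_nil x)
    simp only [sigmaL, flatMap_cons, length_append, length_cons] at ih ⊢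
    omega

def tribPrefix (m : ℕ) : List ℕ := sigmaL^[m + 1] [0]

theorem tribPrefix_succ (m : ℕ) : tribPrefix (m + 1) = sigmaL (tribPrefix m) :=
  Function.iterate_succ_apply' _ _ _

theorem tribPrefix_isPrefix_succ (m : ℕ) : tribPrefix m <+: tribPrefix (m + 1) := by
  induction m with
  | zero => exact ⟨[0, 2], rfl⟩
  | succ m ih =>
    rw [tribPrefix_succ, tribPrefix_succ (m + 1)]
    exact ih.flatMap sigmaW

theorem tribPrefix_isPrefix_of_le {m m' : ℕ} (h : m ≤ m') : tribPrefix m <+: tribPrefix m' := by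
  induction h with
  | refl => exact prefix_rfl
  | step _ ih => exact ih.trans (tribPrefix_isPrefix_succ _)

theorem lt_length_tribPrefix (m : ℕ) : m < (tribPrefix m).length := by
  induction m with
  | zero => simp [tribPrefix, sigmaL, sigmaW]
  | succ m ih =>
    obtain ⟨u, hu⟩ := tribPrefix_isPrefix_of_le (Nat.zero_le m)
    have hσ : tribPrefix (m + 1) = [0, 1, 0, 2] ++ sigmaL u := by
      rw [tribPrefix_succ, ← hu, sigmaL, flatMap_append]
      rfl
    have hlen : (tribPrefix m).length = u.length + 2 := by
      rw [← hu]
      simp [tribPrefix, sigmaL, sigmaW]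
    have := length_le_length_sigmaL u
    simp only [hσ, length_append, length_cons, length_nil]
    omega

theorem t_eq_getElem_tribPrefix {m n : ℕ} (h : n < (tribPrefix m).length) :
    t n = (tribPrefix m)[n] := by
  have hn := lt_length_tribPrefix n
  change (tribPrefix n).getD n 0 = _
  rw [getD_eq_getElem _ _ hn]
  rcases le_total n m with hle | hle
  · exact (tribPrefix_isPrefix_of_le hle).getElem hn
  · exact ((tribPrefix_isPrefix_of_le hle).getElem h).symm

theorem map_t_range_isPrefix {m n : ℕ} (h : n ≤ (tribPrefix m).length) :
    (range n).map t <+: tribPrefix m := by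
  rw [prefix_iff_eq_take]
  refine ext_getElem (by simpa using h) fun i _ hi => ?_
  rw [getElem_map, getElem_range, getElem_take]
  exact t_eq_getElem_tribPrefix _

/-- Start of the block `σ(t n)` in the factorisation `t = σ(t 0) σ(t 1) ⋯`. -/
def blockStart (n : ℕ) : ℕ := (sigmaL ((range n).map t)).length

theorem sigmaL_map_t_range_succ (n : ℕ) :
    sigmaL ((range (n + 1)).map t) = sigmaL ((range n).map t) ++ sigmaW (t n) := by
  simp [range_succ, sigmaL]

theorem blockStart_succ (n : ℕ) : blockStart (n + 1) = blockStart n + (sigmaW (t n)).length := by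
  rw [blockStart, sigmaL_map_t_range_succ, length_append, blockStart]

theorem blockStart_strictMono : StrictMono blockStart :=
  strictMono_nat_of_lt_succ fun n => by
    rw [blockStart_succ]
    exact Nat.lt_add_of_pos_right (length_pos_of_ne_nil (sigmaW_ne_nil (t n)))

theorem t_blockStart_add (n : ℕ) {j : ℕ} (hj : j < (sigmaW (t n)).length) :
    t (blockStart n + j) = (sigmaW (t n))[j] := by
  have hpre : sigmaL ((range (n + 1)).map t) <+: tribPrefix (n + 1) := by
    rw [tribPrefix_succ]
    exact (map_t_range_isPrefix (lt_length_tribPrefix n)).flatMap sigmaW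
  have hlt : blockStart n + j < (sigmaL ((range (n + 1)).map t)).length := by
    rw [← blockStart, blockStart_succ]
    omega
  rw [t_eq_getElem_tribPrefix (hlt.trans_le hpre.length_le), ← hpre.getElem hlt]
  simp only [sigmaL_map_t_range_succ, blockStart, getElem_append_right (Nat.le_add_right _ _),
    Nat.add_sub_cancel_left]

theorem exists_blockStart_add_eq (q : ℕ) :
    ∃ n j, ∃ _ : j < (sigmaW (t n)).length, blockStart n + j = q := by
  obtain ⟨n, hle, hlt⟩ :=
    Nat.exists_le_lt_succ_of_strictMono blockStart_strictMono (Nat.zero_le q)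
  rw [blockStart_succ] at hlt
  exact ⟨n, q - blockStart n, by omega, by omega⟩

theorem t_blockStart (n : ℕ) : t (blockStart n) = 0 := by
  have hj := length_pos_of_ne_nil (sigmaW_ne_nil (t n))
  simpa using (t_blockStart_add n hj).trans ((sigmaW_getElem_eq_zero_iff _ hj).2 rfl)

theorem t_eq_zero_iff (q : ℕ) : t q = 0 ↔ q ∈ Set.range blockStart := by
  refine ⟨fun hq => ?_, fun ⟨n, hn⟩ => hn ▸ t_blockStart n⟩
  obtain ⟨n, j, hj, rfl⟩ := exists_blockStart_add_eq q
  rw [t_blockStart_add n hj, sigmaW_getElem_eq_zero_iff] at hq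
  exact ⟨n, by rw [hq, Nat.add_zero]⟩

theorem t_eq_one_iff (q : ℕ) :
    t q = 1 ↔ q ∈ Set.range fun k => blockStart (blockStart k) + 1 := by
  constructor
  · intro hq
    obtain ⟨n, j, hj, rfl⟩ := exists_blockStart_add_eq q
    rw [t_blockStart_add n hj, sigmaW_getElem_eq_one_iff] at hq
    obtain ⟨k, rfl⟩ := (t_eq_zero_iff n).1 hq.1
    exact ⟨k, by rw [hq.2]⟩
  · rintro ⟨k, rfl⟩
    have h0 := t_blockStart k
    have hj : 1 < (sigmaW (t (blockStart k))).length := by simp [h0, sigmaW]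
    rw [t_blockStart_add _ hj]
    exact (sigmaW_getElem_eq_one_iff _ hj).2 ⟨h0, rfl⟩

theorem B_eq_blockStart (n : ℕ) : B n = blockStart n :=
  Nat.nth_eq_of_strictMono blockStart_strictMono t_eq_zero_iff n

theorem A_eq_blockStart_blockStart_add_one (n : ℕ) : A n = blockStart (blockStart n) + 1 :=
  Nat.nth_eq_of_strictMono ((blockStart_strictMono.comp blockStart_strictMono).add_const 1)
    t_eq_one_iff n

end Tribonacci

/-- B(B(k)) = A(k) − 1 for all k ≥ 0. -/
theorem B_comp_B (k : ℕ) : B (B k) = A k - 1 := by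
  rw [Tribonacci.B_eq_blockStart, Tribonacci.B_eq_blockStart,
    Tribonacci.A_eq_blockStart_blockStart_add_one, Nat.add_sub_cancel]
end
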